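/- arXiv:1210.2481 — 8 statements merged into one kernel-verified Lean document; each statement's English description precedes it below -/
import Mathlib

section
/- Let M be a Kripke model whose frame satisfies Γ, which globally satisfies τ, and which contains a world satisfying P_{00}. Then there is a map f : ℕ×ℕ → W such that for all i,j ∈ ℕ: f(i,j) satisfies P_{(i mod 3)(j mod 3)}, R f(i,j) f(i+1,j), and R f(i,j) f(i,j+1). (In other words, the standard infinite grid maps homomorphically into every such model.) -/
/-- Modal formulas over propositional variables indexed by `ℕ`. -/
inductive ModalFormula : Type
  | var : ℕ → ModalFormula
  | neg : ModalFormula → ModalFormula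
  | and : ModalFormula → ModalFormula → ModalFormula
  | or  : ModalFormula → ModalFormula → ModalFormula
  | dia : ModalFormula → ModalFormula
  | box : ModalFormula → ModalFormula

namespace ModalFormula

/-- The canonical encoding of modal formulas by natural numbers. -/
def encode : ModalFormula → ℕ
  | var n => 6 * n
  | neg f => 6 * encode f + 1
  | dia f => 6 * encode f + 2
  | box f => 6 * encode f + 3
  | and f g => 6 * Nat.pair (encode f) (encode g) + 4
  | or f g  => 6 * Nat.pair (encode f) (encode g) + 5

/-- The canonical decoding of natural numbers as modal formulas. -/
def ofNat (n : ℕ) : ModalFormula :=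
  if h0 : n % 6 = 0 then var (n / 6)
  else
    have hn : 0 < n := Nat.pos_of_ne_zero (fun h => h0 (by simp [h]))
    have hd : n / 6 < n := Nat.div_lt_self hn (by norm_num)
    have h1 : (n / 6).unpair.1 < n := lt_of_le_of_lt (Nat.unpair_left_le _) hd
    have h2 : (n / 6).unpair.2 < n := lt_of_le_of_lt (Nat.unpair_right_le _) hd
    if n % 6 = 1 then neg (ofNat (n / 6))
    else if n % 6 = 2 then dia (ofNat (n / 6))
    else if n % 6 = 3 then box (ofNat (n / 6))
    else if n % 6 = 4 then and (ofNat (n / 6).unpair.1) (ofNat (n / 6).unpair.2)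
    else or (ofNat (n / 6).unpair.1) (ofNat (n / 6).unpair.2)
  termination_by n
  decreasing_by all_goals assumption

theorem ofNat_encode : ∀ f : ModalFormula, ofNat (encode f) = f := by
  intro f
  induction f with
  | var n =>
      rw [encode, ofNat]
      simp [Nat.mul_mod_right, Nat.mul_div_cancel_left]
  | neg f ih =>
      rw [encode, ofNat]
      have e1 : (6 * encode f + 1) % 6 = 1 := by omega
      have e2 : (6 * encode f + 1) / 6 = encode f := by omega
      simp [e1, e2, ih]
  | and f g ihf ihg =>
      rw [encode, ofNat]
      have e1 : (6 * Nat.pair (encode f) (encode g) + 4) % 6 = 4 := by omega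
      have e2 : (6 * Nat.pair (encode f) (encode g) + 4) / 6 = Nat.pair (encode f) (encode g) := by
        omega
      simp [e1, e2, ihf, ihg]
  | or f g ihf ihg =>
      rw [encode, ofNat]
      have e1 : (6 * Nat.pair (encode f) (encode g) + 5) % 6 = 5 := by omega
      have e2 : (6 * Nat.pair (encode f) (encode g) + 5) / 6 = Nat.pair (encode f) (encode g) := by
        omega
      simp [e1, e2, ihf, ihg]
  | dia f ih =>
      rw [encode, ofNat]
      have e1 : (6 * encode f + 2) % 6 = 2 := by omega
      have e2 : (6 * encode f + 2) / 6 = encode f := by omega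
      simp [e1, e2, ih]
  | box f ih =>
      rw [encode, ofNat]
      have e1 : (6 * encode f + 3) % 6 = 3 := by omega
      have e2 : (6 * encode f + 3) / 6 = encode f := by omega
      simp [e1, e2, ih]

theorem encode_ofNat : ∀ n : ℕ, encode (ofNat n) = n := by
  intro n
  induction n using Nat.strong_induction_on with
  | _ n ih =>
    rw [ofNat]
    by_cases h0 : n % 6 = 0
    · simp only [h0, dif_pos, encode]
      omega
    · have hn : 0 < n := Nat.pos_of_ne_zero (fun h => h0 (by simp [h]))
      have hd : n / 6 < n := Nat.div_lt_self hn (by norm_num)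
      have h1 : (n / 6).unpair.1 < n := lt_of_le_of_lt (Nat.unpair_left_le _) hd
      have h2 : (n / 6).unpair.2 < n := lt_of_le_of_lt (Nat.unpair_right_le _) hd
      rw [dif_neg h0]
      by_cases e1 : n % 6 = 1
      · rw [if_pos e1, encode, ih _ hd]; omega
      · rw [if_neg e1]
        by_cases e2 : n % 6 = 2
        · rw [if_pos e2, encode, ih _ hd]; omega
        · rw [if_neg e2]
          by_cases e3 : n % 6 = 3
          · rw [if_pos e3, encode, ih _ hd]; omega
          · rw [if_neg e3]
            by_cases e4 : n % 6 = 4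
            · rw [if_pos e4, encode, ih _ h1, ih _ h2, Nat.pair_unpair]; omega
            · rw [if_neg e4, encode, ih _ h1, ih _ h2, Nat.pair_unpair]; omega

/-- The canonical bijection between modal formulas and natural numbers. -/
def equivNat : ModalFormula ≃ ℕ := ⟨encode, ofNat, ofNat_encode, encode_ofNat⟩

/-- The canonical `Primcodable` instance induced by the canonical encoding. -/
instance : Primcodable ModalFormula := Primcodable.ofEquiv ℕ equivNat

end ModalFormula

/-- Local satisfaction of a modal formula at a world of a Kripke model `(W, R, π)`. -/
def Sat {W : Type*} (R : W → W → Prop) (π : W → ℕ → Prop) : W → ModalFormula → Prop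
  | w, .var n => π w n
  | w, .neg f => ¬ Sat R π w f
  | w, .and f g => Sat R π w f ∧ Sat R π w g
  | w, .or f g => Sat R π w f ∨ Sat R π w g
  | w, .dia f => ∃ v, R w v ∧ Sat R π v f
  | w, .box f => ∀ v, R w v → Sat R π v f

/-- Global satisfaction: `φ` holds at every world of the model. -/
def GlobalSat {W : Type*} (R : W → W → Prop) (π : W → ℕ → Prop) (φ : ModalFormula) : Prop :=
  ∀ w, Sat R π w φ

/-- `x` has at least `m` pairwise distinct `R`-successors. -/
def DegGe {W : Type*} (R : W → W → Prop) (m : ℕ) (x : W) : Prop :=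
  ∃ f : Fin m → W, Function.Injective f ∧ ∀ i, R x (f i)

/-- A world is ramified if it has at least `7` pairwise distinct successors. -/
def Ramified {W : Type*} (R : W → W → Prop) (x : W) : Prop := DegGe R 7 x

/-- The frame condition Γ. -/
def FrameGamma {W : Type*} (R : W → W → Prop) : Prop :=
  ∀ x y u z, R x y → R x u → R u z → DegGe R 2 x → DegGe R 4 u → DegGe R 2 z → R y z

/-- The frame condition Γ₁. -/
def FrameGamma1 {W : Type*} (R : W → W → Prop) : Prop :=
  (∃ v₁ v₂, Ramified R v₁ ∧ Ramified R v₂ ∧ v₁ ≠ v₂) →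
    (∀ x, ¬ R x x) ∧
    (∀ x y z, Ramified R x → R x y → R y z → R x z) ∧
    (∀ x y u z, R x y → R x u → R u z → DegGe R 2 x → DegGe R 4 u → DegGe R 2 z →
      R y z ∨ R x z)

/-- The frame condition Γ₂. -/
def FrameGamma2 {W : Type*} (R : W → W → Prop) : Prop :=
  (∀ x y z, Ramified R x → R x y → R y z → R x z) ∧
  ((∃ v, Ramified R v ∧ R v v) →
    ∀ x y u z, R x y → R x u → R u z → DegGe R 2 x → DegGe R 4 u → DegGe R 2 z →
      R y z ∨ R x z)

/-- The propositional variable `P_{ij}` (for `i, j ∈ {0,1,2}`). -/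
def Pv (i j : Fin 3) : ℕ := 3 * i.val + j.val

/-- The propositional variable `A_{ij}`. -/
def Av (i j : Fin 3) : ℕ := 9 + 3 * i.val + j.val

/-- The propositional variable `E^k_{ij}`. -/
def Ev (i j k : Fin 3) : ℕ := 18 + 9 * k.val + 3 * i.val + j.val

/-- The propositional variable `B_{ij}`. -/
def Bv (i j : Fin 3) : ℕ := 45 + 3 * i.val + j.val

/-- The propositional variable `F_{ij}`. -/
def Fv (i j : Fin 3) : ℕ := 54 + 3 * i.val + j.val

/-- The propositional variable `G^l_{ij}` (for `l ∈ {0,…,5}`). -/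
def Gv (i j : Fin 3) (l : Fin 6) : ℕ := 63 + 9 * l.val + 3 * i.val + j.val

/-- The propositional variable `P_d` associated with a domino piece `d`. -/
def Dv (d : ℕ) : ℕ := 117 + d

/-- `n` is one of the variables `P_{ij}`, `A_{ij}`, `E^k_{ij}`. -/
def IsTauVar (n : ℕ) : Prop :=
  (∃ i j, n = Pv i j) ∨ (∃ i j, n = Av i j) ∨ (∃ i j k, n = Ev i j k)

/-- `n` is one of the variables `P_{ij}`, `A_{ij}`, `E^k_{ij}`, `B_{ij}`, `F_{ij}`, `G^l_{ij}`. -/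
def IsTau1Var (n : ℕ) : Prop :=
  IsTauVar n ∨ (∃ i j, n = Bv i j) ∨ (∃ i j, n = Fv i j) ∨ (∃ i j l, n = Gv i j l)

/-- `n` is one of the variables `B_{ij}`, `F_{ij}`, `G^l_{ij}`. -/
def IsBFGVar (n : ℕ) : Prop :=
  (∃ i j, n = Bv i j) ∨ (∃ i j, n = Fv i j) ∨ (∃ i j l, n = Gv i j l)

/-- In the model `(R, π)`, the variable `q` is followed by the variables in `qs`:
every world satisfying `q` has a successor satisfying each member of `qs`, and all its
successors satisfy some member of `qs`. -/
def FollowedBy {W : Type*} (R : W → W → Prop) (π : W → ℕ → Prop) (q : ℕ) (qs : List ℕ) :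
    Prop :=
  ∀ w, π w q → (∀ s ∈ qs, ∃ v, R w v ∧ π v s) ∧ (∀ v, R w v → ∃ s ∈ qs, π v s)

/-- The property `τ` of a Kripke model. -/
def Tau {W : Type*} (R : W → W → Prop) (π : W → ℕ → Prop) : Prop :=
  (∀ w, ∃! n, IsTauVar n ∧ π w n) ∧
  (∀ i j, FollowedBy R π (Pv i j) [Pv (i + 1) j, Pv i (j + 1), Av i j]) ∧
  (∀ i j, FollowedBy R π (Av i j) [Pv (i + 1) (j + 1), Ev i j 0, Ev i j 1, Ev i j 2]) ∧
  (∀ i j k, FollowedBy R π (Ev i j k) [Av i j])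

/-- The property `τ₁` of a Kripke model. -/
def Tau1 {W : Type*} (R : W → W → Prop) (π : W → ℕ → Prop) : Prop :=
  (∀ w, ∃! n, IsTau1Var n ∧ π w n) ∧
  (∀ i j, FollowedBy R π (Pv i j) [Pv (i + 1) j, Pv i (j + 1), Av i j]) ∧
  (∀ i j, FollowedBy R π (Av i j)
    [Pv (i + 1) (j + 1), Fv i j, Ev i j 0, Ev i j 1, Ev i j 2]) ∧
  (∀ i j k, FollowedBy R π (Ev i j k) [Av i j]) ∧
  (∀ i j, FollowedBy R π (Fv i j) [Bv i j]) ∧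
  (∀ i j l, FollowedBy R π (Gv i j l) [Bv i j]) ∧
  (∀ i j w, π w (Bv i j) →
    (∃ v, R w v ∧ π v (Pv (i + 1) (j + 1))) ∧ ∀ l : Fin 6, ∃ v, R w v ∧ π v (Gv i j l))

/-- A domino system: a finite nonempty set of pieces (represented as `Fin k`) together with
horizontal and vertical adjacency relations. -/
structure DominoSystem where
  k : ℕ
  kpos : 0 < k
  H : Fin k → Fin k → Prop
  V : Fin k → Fin k → Prop

/-- The domino system tiles `ℕ × ℕ`. -/
def DominoSystem.TilesNat (DS : DominoSystem) : Prop :=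
  ∃ t : ℕ × ℕ → Fin DS.k, ∀ i j : ℕ,
    DS.H (t (i, j)) (t (i + 1, j)) ∧ DS.V (t (i, j)) (t (i, j + 1))

/-- The domino system tiles the torus `ℤ_m × ℤ_m` for some `m ≥ 1`
(addition on `Fin (m + 1)` is addition modulo `m + 1`). -/
def DominoSystem.TilesTorus (DS : DominoSystem) : Prop :=
  ∃ (m : ℕ) (t : Fin (m + 1) × Fin (m + 1) → Fin DS.k), ∀ i j : Fin (m + 1),
    DS.H (t (i, j)) (t (i + 1, j)) ∧ DS.V (t (i, j)) (t (i, j + 1))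

/-- The property `λ^𝒟` of a Kripke model, for a domino system `𝒟`. -/
def Lambda {W : Type*} (DS : DominoSystem) (R : W → W → Prop) (π : W → ℕ → Prop) : Prop :=
  (∀ w, (∃ i j, π w (Pv i j)) → ∃ d : Fin DS.k, π w (Dv d)) ∧
  (∀ (i j : Fin 3) (d : Fin DS.k) w, π w (Dv d) → π w (Pv i j) →
    ∀ v, R w v → π v (Pv (i + 1) j) → ∃ d', DS.H d d' ∧ π v (Dv d')) ∧
  (∀ (i j : Fin 3) (d : Fin DS.k) w, π w (Dv d) → π w (Pv i j) →
    ∀ v, R w v → π v (Pv i (j + 1)) → ∃ d', DS.V d d' ∧ π v (Dv d'))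

/-!
In a model of τ every `P`-world `x` has a `P_{i,j+1}`-successor and an `A`-successor `u`, and
`u` has a `P_{i+1,j+1}`-successor `z`. Since τ labels each world with exactly one variable, the
prescribed successors are pairwise distinct, so `x`, `u` and `z` have the degrees Γ asks for, and Γ
makes `z` a common successor of all successors of `x`. This closes a grid square, and the grid is
then built row by row: the next row starts above the first world of the current row and continues
with these diagonal points.
-/

theorem exists_seq_of_forall_exists {α : Type*} {p : ℕ → α → Prop} {r : α → α → Prop} {a : α}
    (ha : p 0 a) (h : ∀ n x, p n x → ∃ y, r x y ∧ p (n + 1) y) :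
    ∃ f : ℕ → α, (∀ n, p n (f n)) ∧ ∀ n, r (f n) (f (n + 1)) := by
  choose g hgr hgp using h
  let f : ∀ n, {x // p n x} := fun n => Nat.rec ⟨a, ha⟩ (fun n x => ⟨g n x x.2, hgp n x x.2⟩) n
  exact ⟨fun n => (f n).1, fun n => (f n).2, fun n => hgr n _ (f n).2⟩

section Degree

variable {W : Type*} {R : W → W → Prop} {π : W → ℕ → Prop} {x : W}

theorem DegGe.mono {m n : ℕ} (hmn : m ≤ n) (h : DegGe R n x) : DegGe R m x := by
  obtain ⟨f, hf, hR⟩ := h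
  exact ⟨f ∘ Fin.castLE hmn, hf.comp (Fin.castLE_injective hmn), fun i => hR _⟩

theorem FollowedBy.exists_rel {q : ℕ} {qs : List ℕ} (h : FollowedBy R π q qs) (hx : π x q)
    {s : ℕ} (hs : s ∈ qs) : ∃ y, R x y ∧ π y s :=
  (h x hx).1 s hs

theorem FollowedBy.degGe_length {S : ℕ → Prop} (hS : ∀ w, ∃! n, S n ∧ π w n) {q : ℕ}
    {qs : List ℕ} (h : FollowedBy R π q qs) (hx : π x q) (hnd : qs.Nodup)
    (hqs : ∀ s ∈ qs, S s) : DegGe R qs.length x := by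
  choose y hR hπ using fun k : Fin qs.length => h.exists_rel hx (qs.get_mem k)
  refine ⟨y, fun k l hkl => List.nodup_iff_injective_get.mp hnd ?_, hR⟩
  obtain ⟨n, -, hn⟩ := hS (y k)
  rw [hn _ ⟨hqs _ (qs.get_mem k), hπ k⟩, hn _ ⟨hqs _ (qs.get_mem l), hkl ▸ hπ l⟩]

end Degree

namespace Tau

variable {W : Type*} {R : W → W → Prop} {π : W → ℕ → Prop} {x : W} {i j : Fin 3}

theorem degGe_two_of_Pv (hT : Tau R π) (hx : π x (Pv i j)) : DegGe R 2 x := by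
  refine ((hT.2.1 i j).degGe_length hT.1 hx ?_ ?_).mono (by simp)
  · have := i.isLt; have := j.isLt
    simp [Pv, Av, Fin.val_add]
    omega
  · simp [IsTauVar]

theorem degGe_four_of_Av (hT : Tau R π) (hx : π x (Av i j)) : DegGe R 4 x := by
  refine (hT.2.2.1 i j).degGe_length hT.1 hx ?_ ?_
  · have := i.isLt; have := j.isLt
    simp [Pv, Ev, Fin.val_add]
    omega
  · simp [IsTauVar]

theorem exists_diagonal (hG : FrameGamma R) (hT : Tau R π) (hx : π x (Pv i j)) :
    ∃ z, π z (Pv (i + 1) (j + 1)) ∧ ∀ y, R x y → R y z := by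
  obtain ⟨u, hxu, hu⟩ := (hT.2.1 i j).exists_rel hx (s := Av i j) (by simp)
  obtain ⟨z, huz, hz⟩ := (hT.2.2.1 i j).exists_rel hu (s := Pv (i + 1) (j + 1)) (by simp)
  exact ⟨z, hz, fun y hxy => hG x y u z hxy hxu huz (hT.degGe_two_of_Pv hx)
    (hT.degGe_four_of_Av hu) (hT.degGe_two_of_Pv hz)⟩

end Tau

section GridRow

open Fin.NatCast

def IsGridRow {W : Type*} (R : W → W → Prop) (π : W → ℕ → Prop) (j : ℕ) (r : ℕ → W) : Prop :=
  (∀ i : ℕ, π (r i) (Pv i j)) ∧ ∀ i, R (r i) (r (i + 1))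

variable {W : Type*} {R : W → W → Prop} {π : W → ℕ → Prop}

theorem Tau.exists_isGridRow_zero (hT : Tau R π) {w : W} (hw : π w (Pv 0 0)) :
    ∃ r, IsGridRow R π 0 r :=
  exists_seq_of_forall_exists (p := fun i x => π x (Pv i 0)) (by simpa using hw)
    fun i _ hx => by simpa using (hT.2.1 _ _).exists_rel hx (s := Pv (i + 1 : ℕ) 0) (by simp)

theorem Tau.exists_isGridRow_succ (hG : FrameGamma R) (hT : Tau R π) {j : ℕ} {r : ℕ → W}
    (hr : IsGridRow R π j r) : ∃ r', IsGridRow R π (j + 1) r' ∧ ∀ i, R (r i) (r' i) := by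
  obtain ⟨y, hry, hy⟩ := (hT.2.1 _ _).exists_rel (hr.1 0) (s := Pv 0 (j + 1 : ℕ)) (by simp)
  choose z hz hrz using fun i => hT.exists_diagonal hG (hr.1 i)
  have hvert : ∀ i, R (r i) (Nat.casesOn i y z) := by
    rintro (_ | i)
    exacts [hry, hrz i _ (hr.2 i)]
  refine ⟨fun i => Nat.casesOn i y z, ⟨?_, fun i => hrz i _ (hvert i)⟩, hvert⟩
  rintro (_ | i)
  · simpa using hy
  · simpa using hz i

end GridRow

open Fin.NatCast in
/-- The standard infinite grid maps homomorphically into every model of Γ and `τ`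
containing a world satisfying `P₀₀`. -/
theorem grid_maps_into_gamma_tau_model (W : Type) (R : W → W → Prop) (π : W → ℕ → Prop)
    (hG : FrameGamma R) (hT : Tau R π) (h0 : ∃ w, π w (Pv 0 0)) :
    ∃ f : ℕ × ℕ → W, ∀ i j : ℕ,
      π (f (i, j)) (Pv (i : Fin 3) (j : Fin 3)) ∧
      R (f (i, j)) (f (i + 1, j)) ∧ R (f (i, j)) (f (i, j + 1)) := by
  obtain ⟨w, hw⟩ := h0
  obtain ⟨r₀, hr₀⟩ := hT.exists_isGridRow_zero hw
  obtain ⟨rows, hrows, hvert⟩ := exists_seq_of_forall_exists (p := IsGridRow R π) hr₀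
    fun _ _ hr => (hT.exists_isGridRow_succ hG hr).imp fun _ h => h.symm
  exact ⟨fun p => rows p.2 p.1, fun i j => ⟨(hrows j).1 i, (hrows j).2 i, hvert j i⟩⟩
end

section
/- Every Kripke model that globally satisfies τ has an anti-transitive frame: for all worlds x, u, z, if R x u and R u z then ¬ R x z. -/
/-!
Grade the τ-variables in `ℤ/3 × ℤ/3 × ℤ/2` by `P_{ij} ↦ (i, j, 0)`, `A_{ij} ↦ (i, j, 1)` and
`E^k_{ij} ↦ (i, j, 0)`. Every world of a τ-model carries exactly one τ-variable, so this grades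
the worlds, and τ forces every edge to change the grade by one of `(1,0,0)`, `(0,1,0)`,
`(0,0,1)`, `(1,1,1)`. This set is sum-free, so an edge `x → z` can never change the grade by
as much as a path `x → u → z`.
-/

def IsSumFree {G : Type*} [Add G] (D : Set G) : Prop :=
  ∀ a ∈ D, ∀ b ∈ D, a + b ∉ D

theorem IsSumFree.not_rel_of_rel_of_rel {W G : Type*} [AddGroup G] {D : Set G}
    (hD : IsSumFree D) {R : W → W → Prop} (f : W → G) (hf : ∀ x y, R x y → -f x + f y ∈ D)
    {x u z : W} (hxu : R x u) (huz : R u z) : ¬ R x z := fun hxz => by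
  have hsum : -f x + f u + (-f u + f z) = -f x + f z := by rw [add_assoc, add_neg_cancel_left]
  exact hD _ (hf x u hxu) _ (hf u z huz) (hsum ▸ hf x z hxz)

inductive TauVar
  | P (i j : Fin 3)
  | A (i j : Fin 3)
  | E (i j k : Fin 3)

namespace TauVar

def toNat : TauVar → ℕ
  | P i j => Pv i j
  | A i j => Av i j
  | E i j k => Ev i j k

theorem toNat_injective : Function.Injective toNat := by
  intro v w h
  cases v <;> cases w <;> simp only [toNat, Pv, Av, Ev] at h <;>
    simp only [P.injEq, A.injEq, E.injEq, Fin.ext_iff, reduceCtorEq] <;> omega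

theorem isTauVar_iff {n : ℕ} : IsTauVar n ↔ ∃ v : TauVar, v.toNat = n := by
  constructor
  · rintro (⟨i, j, rfl⟩ | ⟨i, j, rfl⟩ | ⟨i, j, k, rfl⟩)
    exacts [⟨P i j, rfl⟩, ⟨A i j, rfl⟩, ⟨E i j k, rfl⟩]
  · rintro ⟨v, rfl⟩
    cases v with
    | P i j => exact .inl ⟨i, j, rfl⟩
    | A i j => exact .inr (.inl ⟨i, j, rfl⟩)
    | E i j k => exact .inr (.inr ⟨i, j, k, rfl⟩)

def next : TauVar → List TauVar
  | P i j => [P (i + 1) j, P i (j + 1), A i j]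
  | A i j => [P (i + 1) (j + 1), E i j 0, E i j 1, E i j 2]
  | E i j _ => [A i j]

def grade : TauVar → Fin 3 × Fin 3 × Fin 2
  | P i j => (i, j, 0)
  | A i j => (i, j, 1)
  | E i j _ => (i, j, 0)

def gradeSteps : Finset (Fin 3 × Fin 3 × Fin 2) := {(1, 0, 0), (0, 1, 0), (0, 0, 1), (1, 1, 1)}

theorem isSumFree_gradeSteps : IsSumFree (gradeSteps : Set (Fin 3 × Fin 3 × Fin 2)) := by
  simp only [IsSumFree, Finset.mem_coe]
  decide

theorem neg_grade_add_grade_mem_gradeSteps {v w : TauVar} (h : w ∈ v.next) :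
    -v.grade + w.grade ∈ gradeSteps := by
  cases v <;> simp only [next, List.mem_cons, List.not_mem_nil, or_false] at h <;>
    rcases h with rfl | rfl | rfl | rfl <;>
    simp only [grade, Prod.neg_mk, Prod.mk_add_mk, neg_add_cancel_left, neg_add_cancel] <;> decide

end TauVar

section TauModel

variable {W : Type*} {R : W → W → Prop} {π : W → ℕ → Prop}

theorem Tau.existsUnique_var (hT : Tau R π) (w : W) : ∃! v : TauVar, π w v.toNat := by
  obtain ⟨n, ⟨hn, hwn⟩, huniq⟩ := hT.1 w
  obtain ⟨v, rfl⟩ := TauVar.isTauVar_iff.1 hn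
  exact ⟨v, hwn, fun v' hv' =>
    TauVar.toNat_injective (huniq _ ⟨TauVar.isTauVar_iff.2 ⟨v', rfl⟩, hv'⟩)⟩

theorem Tau.followedBy_next (hT : Tau R π) (v : TauVar) :
    FollowedBy R π v.toNat (v.next.map TauVar.toNat) := by
  obtain ⟨-, hP, hA, hE⟩ := hT
  cases v with
  | P i j => exact hP i j
  | A i j => exact hA i j
  | E i j k => exact hE i j k

theorem Tau.mem_next (hT : Tau R π) {w w' : W} {v v' : TauVar} (hR : R w w')
    (hv : π w v.toNat) (hv' : π w' v'.toNat) : v' ∈ v.next := by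
  obtain ⟨s, hs, hw's⟩ := (hT.followedBy_next v w hv).2 w' hR
  obtain ⟨v'', hv'', rfl⟩ := List.mem_map.1 hs
  rwa [(hT.existsUnique_var w').unique hv' hw's]

theorem Tau.exists_grading (hT : Tau R π) :
    ∃ f : W → Fin 3 × Fin 3 × Fin 2, ∀ x y, R x y → -f x + f y ∈ TauVar.gradeSteps := by
  choose label hlabel using fun w => (hT.existsUnique_var w).exists
  exact ⟨fun w => (label w).grade, fun x y hxy =>
    TauVar.neg_grade_add_grade_mem_gradeSteps (hT.mem_next hxy (hlabel x) (hlabel y))⟩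

end TauModel

/-- Every Kripke model globally satisfying `τ` has an anti-transitive frame. -/
theorem tau_model_antitransitive (W : Type) (R : W → W → Prop) (π : W → ℕ → Prop)
    (hT : Tau R π) :
    ∀ x u z, R x u → R u z → ¬ R x z := by
  obtain ⟨f, hf⟩ := hT.exists_grading
  exact fun x u z => TauVar.isSumFree_gradeSteps.not_rel_of_rel_of_rel f hf
end

section
/- The finite global Γ₁-satisfiability problem for modal logic is decidable: the predicate on modal formulas φ asserting that φ is globally satisfied in some Kripke model with nonempty finite universe W ⊆ ℕ whose frame satisfies Γ₁ is computable. -/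
/-- The global Γ-satisfiability problem: `φ` is globally satisfied in some Kripke model
with nonempty universe `W ⊆ ℕ` whose frame satisfies Γ. -/
def GSatGamma (φ : ModalFormula) : Prop :=
  ∃ (W : Set ℕ) (R : W → W → Prop) (π : W → ℕ → Prop),
    W.Nonempty ∧ FrameGamma R ∧ GlobalSat R π φ

/-- The finite global Γ-satisfiability problem. -/
def FinGSatGamma (φ : ModalFormula) : Prop :=
  ∃ (W : Set ℕ) (R : W → W → Prop) (π : W → ℕ → Prop),
    W.Nonempty ∧ W.Finite ∧ FrameGamma R ∧ GlobalSat R π φ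

/-- The global Γ₁-satisfiability problem. -/
def GSatGamma1 (φ : ModalFormula) : Prop :=
  ∃ (W : Set ℕ) (R : W → W → Prop) (π : W → ℕ → Prop),
    W.Nonempty ∧ FrameGamma1 R ∧ GlobalSat R π φ

/-- The finite global Γ₁-satisfiability problem. -/
def FinGSatGamma1 (φ : ModalFormula) : Prop :=
  ∃ (W : Set ℕ) (R : W → W → Prop) (π : W → ℕ → Prop),
    W.Nonempty ∧ W.Finite ∧ FrameGamma1 R ∧ GlobalSat R π φ

/-- The global Γ₂-satisfiability problem. -/
def GSatGamma2 (φ : ModalFormula) : Prop :=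
  ∃ (W : Set ℕ) (R : W → W → Prop) (π : W → ℕ → Prop),
    W.Nonempty ∧ FrameGamma2 R ∧ GlobalSat R π φ

/-- The finite global Γ₂-satisfiability problem. -/
def FinGSatGamma2 (φ : ModalFormula) : Prop :=
  ∃ (W : Set ℕ) (R : W → W → Prop) (π : W → ℕ → Prop),
    W.Nonempty ∧ W.Finite ∧ FrameGamma2 R ∧ GlobalSat R π φ

/-!
A finite Γ₁-model of `φ` contains a generated submodel in which every world reaches every
other one. Two distinct ramified worlds `x ≠ y` there would trigger Γ₁, whose clause (b) turns
the loop `x → … → y → … → x` into `R x x`, against clause (a). So that submodel has at most one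
ramified world, and Γ₁ holds in it vacuously.

Filtrating through the formulas with code `≤ e = encode φ` keeps `φ` globally true, creates no
ramified world and leaves at most `2 ^ (e + 1)` worlds. The small model is coded by its adjacency bits, its valuation bits
and the bit table of truth values of all codes `≤ e`. That table can be checked one layer of
the code at a time, so finite Γ₁-satisfiability becomes a bounded search over a primitive
recursive predicate.
-/

open ModalFormula Relation Function

section Semantics

variable {W : Type*} (R : W → W → Prop) (π : W → ℕ → Prop)

def SatStep (S : ModalFormula → W → Prop) : ModalFormula → W → Prop
  | .var n, w => π w n
  | .neg f, w => ¬ S f w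
  | .and f g, w => S f w ∧ S g w
  | .or f g, w => S f w ∨ S g w
  | .dia f, w => ∃ v, R w v ∧ S f v
  | .box f, w => ∀ v, R w v → S f v

theorem sat_iff_satStep (f : ModalFormula) (w : W) :
    Sat R π w f ↔ SatStep R π (fun g v => Sat R π v g) f w := by
  cases f <;> rfl

theorem satStep_comap {V : Type*} {R' : V → V → Prop} {π' : V → ℕ → Prop}
    {S : ModalFormula → W → Prop} {S' : ModalFormula → V → Prop} (g : V → W)
    (hR : ∀ a b, R' a b ↔ R (g a) (g b)) (hg : ∀ a w, R (g a) w → ∃ b, g b = w)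
    (f : ModalFormula) (hπ : ∀ a n, 6 * n ≤ encode f → (π' a n ↔ π (g a) n))
    (hS : ∀ h, encode h < encode f → ∀ a, (S' h a ↔ S h (g a))) (a : V) :
    SatStep R' π' S' f a ↔ SatStep R π S f (g a) := by
  cases f with
  | var n => exact hπ a n le_rfl
  | neg f => exact not_congr (hS f (by grind [encode]) a)
  | and f f' =>
    exact and_congr (hS f (by grind [encode, Nat.left_le_pair]) a)
      (hS f' (by grind [encode, Nat.right_le_pair]) a)
  | or f f' =>
    exact or_congr (hS f (by grind [encode, Nat.left_le_pair]) a)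
      (hS f' (by grind [encode, Nat.right_le_pair]) a)
  | dia f =>
    have hf := hS f (by grind [encode])
    constructor
    · rintro ⟨b, hab, hb⟩
      exact ⟨g b, (hR a b).1 hab, (hf b).1 hb⟩
    · rintro ⟨w, hw, hSw⟩
      obtain ⟨b, rfl⟩ := hg a w hw
      exact ⟨b, (hR a b).2 hw, (hf b).2 hSw⟩
  | box f =>
    have hf := hS f (by grind [encode])
    constructor
    · intro h w hw
      obtain ⟨b, rfl⟩ := hg a w hw
      exact (hf b).1 (h b ((hR a b).2 hw))
    · exact fun h b hab => (hf b).2 (h (g b) ((hR a b).1 hab))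

theorem satStep_congr {S S' : ModalFormula → W → Prop} (f : ModalFormula)
    (h : ∀ g, encode g < encode f → ∀ w, (S' g w ↔ S g w)) (w : W) :
    SatStep R π S' f w ↔ SatStep R π S f w :=
  satStep_comap R π id (fun _ _ => Iff.rfl) (fun _ w _ => ⟨w, rfl⟩) f
    (fun _ _ _ => Iff.rfl) h w

theorem sat_comap {V : Type*} {R' : V → V → Prop} {π' : V → ℕ → Prop} (g : V → W)
    (hR : ∀ a b, R' a b ↔ R (g a) (g b)) (hg : ∀ a w, R (g a) w → ∃ b, g b = w) (e : ℕ)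
    (hπ : ∀ a n, 6 * n ≤ e → (π' a n ↔ π (g a) n)) (f : ModalFormula)
    (hf : encode f ≤ e) (a : V) : Sat R' π' a f ↔ Sat R π (g a) f := by
  induction hm : encode f using Nat.strong_induction_on generalizing f a with
  | _ m ih =>
    rw [sat_iff_satStep, sat_iff_satStep]
    exact satStep_comap R π g hR hg f (fun a n hn => hπ a n (hn.trans hf))
      (fun h hh b => ih _ (hm ▸ hh) h (hh.le.trans hf) b rfl) a

/-- `L m` stands for the truth set of the formula with code `m`; the step decodes the top layer
of `m` exactly as `ModalFormula.ofNat` does. -/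
def CodeStep (L : ℕ → W → Prop) (m : ℕ) (w : W) : Prop :=
  m % 6 = 0 ∧ π w (m / 6) ∨
  m % 6 = 1 ∧ ¬ L (m / 6) w ∨
  m % 6 = 2 ∧ (∃ v, R w v ∧ L (m / 6) v) ∨
  m % 6 = 3 ∧ (∀ v, R w v → L (m / 6) v) ∨
  m % 6 = 4 ∧ (L (m / 6).unpair.1 w ∧ L (m / 6).unpair.2 w) ∨
  m % 6 = 5 ∧ (L (m / 6).unpair.1 w ∨ L (m / 6).unpair.2 w)

def IsTruthLabeling (L : ℕ → W → Prop) (e : ℕ) : Prop :=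
  ∀ m ≤ e, ∀ w, L m w ↔ CodeStep R π L m w

theorem codeStep_encode (L : ℕ → W → Prop) (f : ModalFormula) (w : W) :
    CodeStep R π L (encode f) w ↔ SatStep R π (fun g => L (encode g)) f w := by
  cases f <;> simp [CodeStep, SatStep, encode, Nat.mul_add_div]

theorem codeStep_comap {V : Type*} {R' : V → V → Prop} {π' : V → ℕ → Prop}
    {L : ℕ → W → Prop} {L' : ℕ → V → Prop} (g : V → W)
    (hR : ∀ a b, R' a b ↔ R (g a) (g b)) (hg : ∀ a w, R (g a) w → ∃ b, g b = w)
    (hπ : ∀ a n, π' a n ↔ π (g a) n) (hL : ∀ j a, L' j a ↔ L j (g a)) (m : ℕ) (a : V) :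
    CodeStep R' π' L' m a ↔ CodeStep R π L m (g a) := by
  obtain ⟨f, rfl⟩ : ∃ f, encode f = m := ⟨ofNat m, encode_ofNat m⟩
  rw [codeStep_encode, codeStep_encode]
  exact satStep_comap R π g hR hg f (fun a n _ => hπ a n) (fun h _ a => hL (encode h) a) a

theorem isTruthLabeling_sat (e : ℕ) :
    IsTruthLabeling R π (fun m w => Sat R π w (ofNat m)) e := by
  intro m _ w
  obtain ⟨f, rfl⟩ : ∃ f, encode f = m := ⟨ofNat m, encode_ofNat m⟩
  simpa only [codeStep_encode, ofNat_encode] using sat_iff_satStep R π f w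

variable {R π}

theorem IsTruthLabeling.iff_sat {L : ℕ → W → Prop} {e : ℕ} (hL : IsTruthLabeling R π L e)
    (f : ModalFormula) (hf : encode f ≤ e) (w : W) : L (encode f) w ↔ Sat R π w f := by
  induction hm : encode f using Nat.strong_induction_on generalizing f w with
  | _ m ih =>
    subst hm
    rw [hL _ hf, codeStep_encode, sat_iff_satStep]
    exact satStep_congr R π f (fun h hh v => ih _ hh h (hh.le.trans hf) v rfl) w

theorem IsTruthLabeling.congr {L L' : ℕ → W → Prop} {e : ℕ} (hL : IsTruthLabeling R π L e)
    (h : ∀ m ≤ e, ∀ w, L m w ↔ L' m w) : IsTruthLabeling R π L' e := by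
  intro m hm w
  obtain ⟨f, rfl⟩ : ∃ f, encode f = m := ⟨ofNat m, encode_ofNat m⟩
  rw [← h _ hm, hL _ hm, codeStep_encode, codeStep_encode]
  exact satStep_congr R π f (fun g hg v => h _ (hg.le.trans hm) v) w

end Semantics

section Frames

variable {W : Type*} (R : W → W → Prop)

def AtMostOneRamified : Prop := ∀ x y, Ramified R x → Ramified R y → x = y

theorem degGe_iff_le_card [Finite W] (m : ℕ) (x : W) :
    DegGe R m x ↔ m ≤ Nat.card {y // R x y} := by
  classical
  have := Fintype.ofFinite W
  rw [Nat.card_eq_fintype_card, ← Fintype.card_fin m, ← Function.Embedding.nonempty_iff_card_le,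
    Fintype.card_fin]
  constructor
  · rintro ⟨f, hf, hR⟩
    exact ⟨⟨fun i => ⟨f i, hR i⟩, fun i j h => hf (congrArg Subtype.val h)⟩⟩
  · rintro ⟨f⟩
    exact ⟨fun i => f i, fun i j h => f.injective (Subtype.ext h), fun i => (f i).2⟩

variable {R}

theorem AtMostOneRamified.frameGamma1 (h : AtMostOneRamified R) : FrameGamma1 R :=
  fun ⟨x, y, hx, hy, hne⟩ => absurd (h x y hx hy) hne

theorem DegGe.comap {V : Type*} {R' : V → V → Prop} {g : V → W} (hg : Injective g)
    (hR : ∀ a b, R' a b → R (g a) (g b)) {m : ℕ} {a : V} (h : DegGe R' m a) :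
    DegGe R m (g a) :=
  let ⟨f, hf, hRf⟩ := h
  ⟨g ∘ f, hg.comp hf, fun i => hR _ _ (hRf i)⟩

theorem AtMostOneRamified.comap {V : Type*} {R' : V → V → Prop} {g : V → W} (hg : Injective g)
    (hR : ∀ a b, R' a b → R (g a) (g b)) (h : AtMostOneRamified R) : AtMostOneRamified R' :=
  fun _ _ hx hy => hg (h _ _ (DegGe.comap hg hR hx) (DegGe.comap hg hR hy))

theorem FrameGamma1.eq_of_ramified (hG : FrameGamma1 R) {x y : W} (hx : Ramified R x)
    (hy : Ramified R y) (hxy : ReflTransGen R x y) (hyx : ReflTransGen R y x) : x = y := by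
  by_contra hne
  obtain ⟨hirr, htrans, -⟩ := hG ⟨x, y, hx, hy, hne⟩
  have hx_trans : ∀ z, TransGen R x z → R x z := fun z h => by
    induction h with
    | single h => exact h
    | tail _ hbc ih => exact htrans _ _ _ hx ih hbc
  have hloop : TransGen R x x :=
    ((reflTransGen_iff_eq_or_transGen.1 hxy).resolve_left (Ne.symm hne)).trans_left hyx
  exact hirr x (hx_trans x hloop)

variable (R)

theorem exists_final_cluster [Finite W] [Nonempty W] :
    ∃ U : Set W, U.Nonempty ∧ (∀ x ∈ U, ∀ y, R x y → y ∈ U) ∧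
      ∀ x ∈ U, ∀ y ∈ U, ReflTransGen R x y := by
  obtain ⟨x₀, hx₀⟩ := Finite.exists_min fun x => {y | ReflTransGen R x y}.ncard
  refine ⟨{y | ReflTransGen R x₀ y}, ⟨x₀, .refl⟩, fun x hx y hxy => hx.tail hxy,
    fun x hx y hy => ?_⟩
  have hsub : {y | ReflTransGen R x y} ⊆ {y | ReflTransGen R x₀ y} := fun z hz => hx.trans hz
  rwa [← Set.eq_of_subset_of_ncard_le hsub (hx₀ x)] at hy

theorem exists_submodel_atMostOneRamified [Finite W] [Nonempty W] (π : W → ℕ → Prop)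
    (hG : FrameGamma1 R) {φ : ModalFormula} (hφ : GlobalSat R π φ) :
    ∃ U : Set W, U.Nonempty ∧ AtMostOneRamified (fun a b : U => R a b) ∧
      GlobalSat (fun a b : U => R a b) (fun a => π a) φ := by
  obtain ⟨U, hne, hclosed, hcluster⟩ := exists_final_cluster R
  have hR : ∀ a b : U, R a b → R a b := fun _ _ => id
  refine ⟨U, hne, fun a b ha hb => Subtype.ext ?_, fun a => ?_⟩
  · exact hG.eq_of_ramified (DegGe.comap Subtype.val_injective hR ha)
      (DegGe.comap Subtype.val_injective hR hb) (hcluster _ a.2 _ b.2) (hcluster _ b.2 _ a.2)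
  · exact (sat_comap R π Subtype.val (fun _ _ => Iff.rfl)
      (fun a w h => ⟨⟨w, hclosed _ a.2 _ h⟩, rfl⟩) (encode φ) (fun _ _ _ => Iff.rfl) φ
      le_rfl a).2 (hφ a)

end Frames

section Filtration

variable {W : Type*} (R : W → W → Prop) (π : W → ℕ → Prop) (e : ℕ)

def formulaType (w : W) (m : Fin (e + 1)) : Prop := Sat R π w (ofNat m)

abbrev Filtration : Type _ := Quotient (Setoid.ker (formulaType R π e))

namespace Filtration

/-- Successors are read off the representative `q.out` only, so that a ramified class has a
ramified representative. -/
def rel (q q' : Filtration R π e) : Prop := ∃ y, R q.out y ∧ ⟦y⟧ = q'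

def val (q : Filtration R π e) (i : ℕ) : Prop := π q.out i

instance : Finite (Filtration R π e) :=
  Finite.of_injective _ (Setoid.kerLift_injective (formulaType R π e))

instance [Nonempty W] : Nonempty (Filtration R π e) := Nonempty.map (⟦·⟧) ‹_›

theorem card_le : Nat.card (Filtration R π e) ≤ 2 ^ (e + 1) := by
  calc Nat.card (Filtration R π e) ≤ Nat.card (Fin (e + 1) → Prop) :=
        Nat.card_le_card_of_injective _ (Setoid.kerLift_injective _)
    _ = 2 ^ (e + 1) := by simp [Nat.card_eq_fintype_card, Fintype.card_prop]

theorem sat_out_mk {f : ModalFormula} (hf : encode f ≤ e) (y : W) :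
    Sat R π (⟦y⟧ : Filtration R π e).out f ↔ Sat R π y f := by
  have := congrFun (Setoid.ker_apply_mk_out (f := formulaType R π e) y) ⟨encode f, by omega⟩
  simpa [formulaType, ofNat_encode] using this

theorem sat_iff (f : ModalFormula) (hf : encode f ≤ e) (q : Filtration R π e) :
    Sat (rel R π e) (val R π e) q f ↔ Sat R π q.out f := by
  induction hm : encode f using Nat.strong_induction_on generalizing f q with
  | _ m ih =>
    subst hm
    have ih' : ∀ h, encode h < encode f → ∀ q : Filtration R π e,
        Sat (rel R π e) (val R π e) q h ↔ Sat R π q.out h :=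
      fun h hh q => ih _ hh h (hh.le.trans hf) q rfl
    rw [sat_iff_satStep, sat_iff_satStep]
    cases f with
    | var n => rfl
    | neg f => exact not_congr (ih' f (by grind [encode]) q)
    | and f f' =>
      exact and_congr (ih' f (by grind [encode, Nat.left_le_pair]) q)
        (ih' f' (by grind [encode, Nat.right_le_pair]) q)
    | or f f' =>
      exact or_congr (ih' f (by grind [encode, Nat.left_le_pair]) q)
        (ih' f' (by grind [encode, Nat.right_le_pair]) q)
    | dia f =>
      have hf' : encode f ≤ e := by grind [encode]
      simp only [SatStep, rel, exists_exists_and_eq_and, ih' f (by grind [encode]),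
        sat_out_mk R π e hf']
    | box f =>
      have hf' : encode f ≤ e := by grind [encode]
      simp only [SatStep, rel, forall_exists_index, and_imp, forall_apply_eq_imp_iff₂,
        ih' f (by grind [encode]), sat_out_mk R π e hf']

variable {R π}

theorem degGe_out {m : ℕ} {q : Filtration R π e} (h : DegGe (rel R π e) m q) :
    DegGe R m q.out := by
  obtain ⟨f, hf, hRf⟩ := h
  choose y hy hyf using hRf
  exact ⟨y, fun i j hij => hf (by rw [← hyf i, ← hyf j, hij]), hy⟩

theorem atMostOneRamified (h : AtMostOneRamified R) : AtMostOneRamified (rel R π e) :=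
  fun _ _ hx hy => Quotient.out_inj.1 (h _ _ (degGe_out e hx) (degGe_out e hy))

theorem globalSat {φ : ModalFormula} (hφ : GlobalSat R π φ) :
    GlobalSat (rel R π (encode φ)) (val R π (encode φ)) φ :=
  fun q => (sat_iff R π _ φ le_rfl q).2 (hφ q.out)

end Filtration

end Filtration

section Coding

/-- Entry `(x, y)` of `t` read as a row-major bit matrix with `c` columns. -/
def bitEntry (c t x y : ℕ) : Bool := t.testBit (x * c + y)

theorem exists_bitEntry_iff (a c : ℕ) (P : Set.Iio a → Set.Iio c → Prop) :
    ∃ t < 2 ^ (a * c), ∀ (x : Set.Iio a) (y : Set.Iio c), bitEntry c t x y ↔ P x y := by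
  classical
  refine ⟨Nat.ofBits fun i : Fin (a * c) =>
    decide (∃ (hx : i / c < a) (hy : i % c < c), P ⟨i / c, hx⟩ ⟨i % c, hy⟩),
    Nat.ofBits_lt_two_pow _, fun ⟨x, hx⟩ ⟨y, hy⟩ => ?_⟩
  rw [Set.mem_Iio] at hx hy
  have hlt : x * c + y < a * c := by nlinarith
  have hdiv : (x * c + y) / c = x := by
    rw [Nat.add_comm, Nat.add_mul_div_right _ _ (by omega), Nat.div_eq_of_lt hy, zero_add]
  simp [bitEntry, Nat.testBit_ofBits_lt _ _ hlt, hdiv, Nat.mul_add_mod_of_lt hy, hx, hy]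

def codedRel (n r : ℕ) (x y : Set.Iio n) : Prop := bitEntry n r x y

def codedVal (n k v : ℕ) (w : Set.Iio n) (i : ℕ) : Prop := bitEntry k v w i

def codedLabel (n k l m : ℕ) (w : Set.Iio n) : Prop := bitEntry k l w m

def codedOutdeg (n r x : ℕ) : ℕ := ((List.range n).filter fun y => bitEntry n r x y).length

/-- Only the valuation bits of variables `i` with `6 * i ≤ e` are ever read, and only the
labels of codes `≤ e`. -/
def IsCodedWitness (e n r v l : ℕ) : Prop :=
  IsTruthLabeling (codedRel n r) (codedVal n (e + 1) v) (codedLabel n (e + 1) l) e ∧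
    (∀ w, codedLabel n (e + 1) l e w) ∧ AtMostOneRamified (codedRel n r)

def HasSmallCodedModel (e : ℕ) : Prop :=
  ∃ n < 2 ^ (e + 1) + 1, 0 < n ∧ ∃ r < 2 ^ (n * n), ∃ v < 2 ^ (n * (e + 1)),
    ∃ l < 2 ^ (n * (e + 1)), IsCodedWitness e n r v l

theorem degGe_codedRel_iff (n r m : ℕ) (x : Set.Iio n) :
    DegGe (codedRel n r) m x ↔ m ≤ codedOutdeg n r x := by
  rw [degGe_iff_le_card, codedOutdeg, ← List.toFinset_card_of_nodup (List.nodup_range.filter _),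
    ← Nat.card_eq_finsetCard]
  exact iff_of_eq <| congrArg _ <| Nat.card_congr <|
    (Equiv.subtypeSubtypeEquivSubtypeInter (· ∈ Set.Iio n) (bitEntry n r x · = true)).trans
      (Equiv.subtypeEquivRight (by simp))

theorem isCodedWitness_iff (e n r v l : ℕ) : IsCodedWitness e n r v l ↔
    (∀ m < e + 1, ∀ w < n, (bitEntry (e + 1) l w m ↔
      CodeStep (fun x y => y < n ∧ bitEntry n r x y) (fun w i => bitEntry (e + 1) v w i)
        (fun m w => bitEntry (e + 1) l w m) m w)) ∧
    (∀ w < n, bitEntry (e + 1) l w e) ∧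
    ∀ x < n, ∀ y < n, 7 ≤ codedOutdeg n r x → 7 ≤ codedOutdeg n r y → x = y := by
  have hstep (m : ℕ) (w : Set.Iio n) :
      CodeStep (codedRel n r) (codedVal n (e + 1) v) (codedLabel n (e + 1) l) m w ↔
        CodeStep (fun x y => y < n ∧ bitEntry n r x y) (fun w i => bitEntry (e + 1) v w i)
          (fun m w => bitEntry (e + 1) l w m) m w :=
    codeStep_comap (R' := codedRel n r) (π' := codedVal n (e + 1) v)
      (L' := codedLabel n (e + 1) l) _ _ Subtype.val (fun _ y => (and_iff_right y.2).symm)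
      (fun _ y h => ⟨⟨y, h.1⟩, rfl⟩) (fun _ _ => Iff.rfl) (fun _ _ => Iff.rfl) m w
  simp only [IsCodedWitness, IsTruthLabeling, hstep, AtMostOneRamified, Ramified,
    degGe_codedRel_iff, codedLabel, Subtype.forall, Set.mem_Iio, Nat.lt_succ_iff, Subtype.mk.injEq]

theorem IsCodedWitness.finGSatGamma1 {φ : ModalFormula} {n r v l : ℕ}
    (h : IsCodedWitness (encode φ) n r v l) (hn : 0 < n) : FinGSatGamma1 φ :=
  ⟨Set.Iio n, codedRel n r, codedVal n _ v, ⟨0, hn⟩, Set.finite_Iio n, h.2.2.frameGamma1,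
    fun w => (h.1.iff_sat φ le_rfl w).1 (h.2.1 w)⟩

theorem exists_isCodedWitness {Q : Type*} [Finite Q] {R : Q → Q → Prop}
    {π : Q → ℕ → Prop} {φ : ModalFormula} (hR : AtMostOneRamified R)
    (hφ : GlobalSat R π φ) :
    ∃ r < 2 ^ (Nat.card Q * Nat.card Q), ∃ v < 2 ^ (Nat.card Q * (encode φ + 1)),
      ∃ l < 2 ^ (Nat.card Q * (encode φ + 1)),
        IsCodedWitness (encode φ) (Nat.card Q) r v l := by
  set n := Nat.card Q
  set k := encode φ + 1
  let g : Set.Iio n ≃ Q := Fin.equivSubtype.symm.trans (Finite.equivFin Q).symm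
  obtain ⟨r, hr, hrR⟩ := exists_bitEntry_iff n n fun x y => R (g x) (g y)
  obtain ⟨v, hv, hvπ⟩ := exists_bitEntry_iff n k fun w i => π (g w) i
  obtain ⟨l, hl, hlS⟩ := exists_bitEntry_iff n k fun w m => Sat R π (g w) (ofNat m)
  have hsat : ∀ f, encode f ≤ encode φ → ∀ w,
      Sat (codedRel n r) (codedVal n k v) w f ↔ Sat R π (g w) f :=
    sat_comap R π g hrR (fun _ w _ => g.surjective w) _
      (fun w i hi => hvπ w ⟨i, by simp only [Set.mem_Iio]; omega⟩)
  refine ⟨r, hr, v, hv, l, hl, ?_, fun w => ?_, hR.comap g.injective fun x y => (hrR x y).1⟩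
  · refine (isTruthLabeling_sat _ _ _).congr fun m hm w => ?_
    rw [hsat _ (by rwa [encode_ofNat]) w]
    exact (hlS w ⟨m, by simp only [Set.mem_Iio]; omega⟩).symm
  · exact (hlS w ⟨encode φ, by simp [k]⟩).2 (by rw [ofNat_encode]; exact hφ (g w))

theorem finGSatGamma1_iff_hasSmallCodedModel (φ : ModalFormula) :
    FinGSatGamma1 φ ↔ HasSmallCodedModel (encode φ) := by
  constructor
  · rintro ⟨W, R, π, hne, hfin, hG, hφ⟩
    have := hne.to_subtype
    have := hfin.to_subtype
    obtain ⟨U, hU, hU1, hUφ⟩ := exists_submodel_atMostOneRamified R π hG hφ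
    have := hU.to_subtype
    obtain ⟨r, hr, v, hv, l, hl, hw⟩ := exists_isCodedWitness
      (Filtration.atMostOneRamified (encode φ) hU1) (Filtration.globalSat hUφ)
    exact ⟨_, Nat.lt_succ_of_le (Filtration.card_le _ _ _), Nat.card_pos,
      r, hr, v, hv, l, hl, hw⟩
  · rintro ⟨n, -, hn, r, -, v, -, l, -, h⟩
    exact h.finGSatGamma1 hn

end Coding

section Primrec

variable {α : Type*} [Primcodable α]

open Primrec

theorem Primrec.nat_pow : Primrec₂ ((· ^ ·) : ℕ → ℕ → ℕ) :=
  Primrec₂.unpaired'.1 Nat.Primrec.pow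

theorem PrimrecPred.imp {p q : α → Prop} (hp : PrimrecPred p) (hq : PrimrecPred q) :
    PrimrecPred fun a => p a → q a :=
  (hp.not.or hq).of_eq fun _ => imp_iff_not_or.symm

theorem PrimrecPred.iff {p q : α → Prop} (hp : PrimrecPred p) (hq : PrimrecPred q) :
    PrimrecPred fun a => (p a ↔ q a) :=
  ((hp.and hq).or (hp.not.and hq.not)).of_eq fun _ => iff_iff_and_or_not_and_not.symm

theorem PrimrecPred.exists_lt' {b : α → ℕ} {p : α → ℕ → Prop} (hb : Primrec b)
    (hp : PrimrecPred fun q : α × ℕ => p q.1 q.2) : PrimrecPred fun a => ∃ x < b a, p a x :=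
  ((PrimrecRel.exists_mem_list (R := fun x a => p a x) (hp.comp (snd.pair fst))).comp
    (list_range.comp hb) Primrec.id).of_eq fun _ => by simp

theorem PrimrecPred.forall_lt' {b : α → ℕ} {p : α → ℕ → Prop} (hb : Primrec b)
    (hp : PrimrecPred fun q : α × ℕ => p q.1 q.2) : PrimrecPred fun a => ∀ x < b a, p a x :=
  ((PrimrecRel.forall_mem_list (R := fun x a => p a x) (hp.comp (snd.pair fst))).comp
    (list_range.comp hb) Primrec.id).of_eq fun _ => by simp

theorem primrecPred_bitEntry {c t x y : α → ℕ} (hc : Primrec c) (ht : Primrec t)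
    (hx : Primrec x) (hy : Primrec y) :
    PrimrecPred fun a => bitEntry (c a) (t a) (x a) (y a) = true := by
  have hi : Primrec fun a => x a * c a + y a := nat_add.comp (nat_mul.comp hx hc) hy
  refine (Primrec.eq.comp (nat_mod.comp (nat_div.comp ht (nat_pow.comp (const 2) hi)) (const 2))
    (const 1)).of_eq fun a => ?_
  simp [bitEntry, Nat.testBit_eq_decide_div_mod_eq]

theorem primrec_codedOutdeg {n r x : α → ℕ} (hn : Primrec n) (hr : Primrec r)
    (hx : Primrec x) : Primrec fun a => codedOutdeg (n a) (r a) (x a) := by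
  have hR : PrimrecRel fun (y : ℕ) a => bitEntry (n a) (r a) (x a) y = true :=
    primrecPred_bitEntry (hn.comp snd) (hr.comp snd) (hx.comp snd) fst
  exact (list_length.comp ((hR.listFilter).comp (list_range.comp hn) Primrec.id)).of_eq
    fun a => by simp [codedOutdeg]

theorem PrimrecPred.codeStep {R π L : α → ℕ → ℕ → Prop} {b m w : α → ℕ}
    (hR : PrimrecPred fun p : α × ℕ × ℕ => R p.1 p.2.1 p.2.2)
    (hRb : ∀ a x y, R a x y → y < b a)
    (hπ : PrimrecPred fun p : α × ℕ × ℕ => π p.1 p.2.1 p.2.2)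
    (hL : PrimrecPred fun p : α × ℕ × ℕ => L p.1 p.2.1 p.2.2)
    (hb : Primrec b) (hm : Primrec m) (hw : Primrec w) :
    PrimrecPred fun a => CodeStep (R a) (π a) (L a) (m a) (w a) := by
  have hcase (i : ℕ) : PrimrecPred fun a => m a % 6 = i :=
    Primrec.eq.comp (nat_mod.comp hm (const 6)) (const i)
  have hd : Primrec fun a => m a / 6 := nat_div.comp hm (const 6)
  have hd₁ : Primrec fun a => (m a / 6).unpair.1 := fst.comp (unpair.comp hd)
  have hd₂ : Primrec fun a => (m a / 6).unpair.2 := snd.comp (unpair.comp hd)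
  have lab {j u : α → ℕ} (hj : Primrec j) (hu : Primrec u) :
      PrimrecPred fun a => L a (j a) (u a) :=
    hL.comp (Primrec.id.pair (hj.pair hu))
  have hsucc : PrimrecPred fun q : α × ℕ => R q.1 (w q.1) q.2 :=
    hR.comp (fst.pair ((hw.comp fst).pair snd))
  have hlab : PrimrecPred fun q : α × ℕ => L q.1 (m q.1 / 6) q.2 :=
    hL.comp (fst.pair ((hd.comp fst).pair snd))
  have hdia : PrimrecPred fun a => ∃ y < b a, R a (w a) y ∧ L a (m a / 6) y :=
    PrimrecPred.exists_lt' (p := fun a y => R a (w a) y ∧ L a (m a / 6) y) hb (hsucc.and hlab)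
  have hbox : PrimrecPred fun a => ∀ y < b a, R a (w a) y → L a (m a / 6) y :=
    PrimrecPred.forall_lt' (p := fun a y => R a (w a) y → L a (m a / 6) y) hb (hsucc.imp hlab)
  refine (((hcase 0).and (hπ.comp (Primrec.id.pair (hw.pair hd)))).or
    (((hcase 1).and (lab hd hw).not).or
    (((hcase 2).and hdia).or
    (((hcase 3).and hbox).or
    (((hcase 4).and ((lab hd₁ hw).and (lab hd₂ hw))).or
    ((hcase 5).and ((lab hd₁ hw).or (lab hd₂ hw)))))))).of_eq fun a => ?_
  have hex : (∃ v, R a (w a) v ∧ L a (m a / 6) v) ↔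
      ∃ y < b a, R a (w a) y ∧ L a (m a / 6) y :=
    ⟨fun ⟨y, hy⟩ => ⟨y, hRb _ _ _ hy.1, hy⟩, fun ⟨y, _, hy⟩ => ⟨y, hy⟩⟩
  have hall : (∀ v, R a (w a) v → L a (m a / 6) v) ↔
      ∀ y < b a, R a (w a) y → L a (m a / 6) y :=
    ⟨fun h y _ => h y, fun h y hy => h y (hRb _ _ _ hy) hy⟩
  simp only [CodeStep, hex, hall, id]

theorem PrimrecPred.isCodedWitness {e n r v l : α → ℕ} (he : Primrec e) (hn : Primrec n)
    (hr : Primrec r) (hv : Primrec v) (hl : Primrec l) :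
    PrimrecPred fun a => IsCodedWitness (e a) (n a) (r a) (v a) (l a) := by
  have hk : Primrec fun a => e a + 1 := succ.comp he
  refine PrimrecPred.of_eq ?_ fun a => (isCodedWitness_iff _ _ _ _ _).symm
  refine (PrimrecPred.forall_lt' hk (PrimrecPred.forall_lt' (hn.comp fst) ?_)).and
    ((PrimrecPred.forall_lt' hn ?_).and
      (PrimrecPred.forall_lt' hn (PrimrecPred.forall_lt' (hn.comp fst) ?_)))
  · have ha : Primrec fun q : (α × ℕ) × ℕ => q.1.1 := fst.comp fst
    have hp : Primrec fun p : ((α × ℕ) × ℕ) × ℕ × ℕ => p.1.1.1 := ha.comp fst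
    refine (primrecPred_bitEntry (hk.comp ha) (hl.comp ha) snd (snd.comp fst)).iff
      (PrimrecPred.codeStep ?_ (fun _ _ _ h => h.1) ?_ ?_ (hn.comp ha) (snd.comp fst) snd)
    · exact (nat_lt.comp (snd.comp snd) (hn.comp hp)).and
        (primrecPred_bitEntry (hn.comp hp) (hr.comp hp) (fst.comp snd) (snd.comp snd))
    · exact primrecPred_bitEntry (hk.comp hp) (hv.comp hp) (fst.comp snd) (snd.comp snd)
    · exact primrecPred_bitEntry (hk.comp hp) (hl.comp hp) (snd.comp snd) (fst.comp snd)
  · exact primrecPred_bitEntry (hk.comp fst) (hl.comp fst) snd (he.comp fst)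
  · have ha : Primrec fun q : (α × ℕ) × ℕ => q.1.1 := fst.comp fst
    have hdeg {x : (α × ℕ) × ℕ → ℕ} (hx : Primrec x) :
        PrimrecPred fun q => 7 ≤ codedOutdeg (n q.1.1) (r q.1.1) (x q) :=
      nat_le.comp (const 7) (primrec_codedOutdeg (hn.comp ha) (hr.comp ha) hx)
    exact (hdeg (snd.comp fst)).imp ((hdeg snd).imp (Primrec.eq.comp (snd.comp fst) snd))

theorem primrecPred_hasSmallCodedModel : PrimrecPred HasSmallCodedModel := by
  have two_pow {β : Type} [Primcodable β] {x : β → ℕ} (hx : Primrec x) :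
      Primrec fun b => 2 ^ x b :=
    nat_pow.comp (const 2) hx
  refine PrimrecPred.exists_lt' (succ.comp (two_pow succ)) ((nat_lt.comp (const 0) snd).and ?_)
  refine PrimrecPred.exists_lt' (two_pow (nat_mul.comp snd snd)) ?_
  refine PrimrecPred.exists_lt'
    (two_pow (nat_mul.comp (snd.comp fst) (succ.comp (fst.comp fst)))) ?_
  refine PrimrecPred.exists_lt'
    (two_pow (nat_mul.comp (snd.comp (fst.comp fst)) (succ.comp (fst.comp (fst.comp fst))))) ?_
  exact PrimrecPred.isCodedWitness (fst.comp (fst.comp (fst.comp fst)))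
    (snd.comp (fst.comp (fst.comp fst))) (snd.comp (fst.comp fst)) (snd.comp fst) snd

end Primrec

/-- The finite global Γ₁-satisfiability problem for modal logic is decidable. -/
theorem gamma1_fingsat_decidable : ComputablePred FinGSatGamma1 :=
  ((primrecPred_hasSmallCodedModel.comp Primrec.encode).of_eq fun φ =>
    (finGSatGamma1_iff_hasSmallCodedModel φ).symm).computablePred
end

section
/- If a modal formula φ is globally satisfied in some nonempty finite Kripke model whose frame satisfies Γ₁, then φ is globally satisfied in some nonempty finite Kripke model containing at most one ramified world. -/
/-
When Γ₁ is active, pick a ramified world `x` whose set of successors is smallest.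
By transitivity at `x` this set is closed under `R`, so the submodel it generates still globally
satisfies `φ`, and degrees computed there agree with those in the whole model. A ramified world
`y` in it would have strictly fewer successors than `x` (they are successors of `x`, and `y` is one
of those but not of itself by irreflexivity), contradicting minimality. So the submodel has no
ramified world at all.
-/

section Submodel

variable {W : Type*} {R : W → W → Prop} {S : Set W}

theorem sat_subtype_iff {π : W → ℕ → Prop} (hS : ∀ ⦃w v⦄, w ∈ S → R w v → v ∈ S)
    (φ : ModalFormula) (w : S) :
    Sat (fun a b : S => R a b) (fun a => π a) w φ ↔ Sat R π w φ := by
  induction φ generalizing w with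
  | var n => rfl
  | neg f ih => exact not_congr (ih w)
  | and f g ihf ihg => exact and_congr (ihf w) (ihg w)
  | or f g ihf ihg => exact or_congr (ihf w) (ihg w)
  | dia f ih =>
      constructor
      · rintro ⟨v, hwv, hv⟩
        exact ⟨v, hwv, (ih v).mp hv⟩
      · rintro ⟨v, hwv, hv⟩
        exact ⟨⟨v, hS w.2 hwv⟩, hwv, (ih _).mpr hv⟩
  | box f ih =>
      constructor
      · intro h v hwv
        exact (ih ⟨v, hS w.2 hwv⟩).mp (h _ hwv)
      · intro h v hwv
        exact (ih v).mpr (h v hwv)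

theorem globalSat_subtype {π : W → ℕ → Prop} {φ : ModalFormula}
    (hS : ∀ ⦃w v⦄, w ∈ S → R w v → v ∈ S) (hφ : GlobalSat R π φ) :
    GlobalSat (fun a b : S => R a b) (fun a => π a) φ :=
  fun w => (sat_subtype_iff hS φ w).mpr (hφ w)

theorem degGe_subtype_iff (hS : ∀ ⦃w v⦄, w ∈ S → R w v → v ∈ S) (m : ℕ) (w : S) :
    DegGe (fun a b : S => R a b) m w ↔ DegGe R m w := by
  constructor
  · rintro ⟨f, hf, hRf⟩
    exact ⟨fun i => f i, Subtype.val_injective.comp hf, hRf⟩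
  · rintro ⟨f, hf, hRf⟩
    exact ⟨fun i => ⟨f i, hS w.2 (hRf i)⟩, fun i j h => hf (congrArg Subtype.val h), hRf⟩

end Submodel

section Ramified

variable {W : Type*} {R : W → W → Prop}

theorem ncard_succ_lt_of_succ_subset [Finite W] {x y : W} (hxy : R x y) (hyy : ¬ R y y)
    (hsub : ∀ z, R y z → R x z) : {z | R y z}.ncard < {z | R x z}.ncard :=
  Set.ncard_lt_ncard ⟨hsub, fun hsup => hyy (hsup hxy)⟩ (Set.toFinite _)

theorem exists_ramified_forall_succ_not_ramified [Finite W] (hirr : ∀ x, ¬ R x x)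
    (htrans : ∀ x y z, Ramified R x → R x y → R y z → R x z) {x₀ : W} (hx₀ : Ramified R x₀) :
    ∃ x, Ramified R x ∧ ∀ y, R x y → ¬ Ramified R y := by
  obtain ⟨x, hx, hmin⟩ := Set.exists_min_image {x | Ramified R x}
    (fun x => {y | R x y}.ncard) (Set.toFinite _) ⟨x₀, hx₀⟩
  refine ⟨x, hx, fun y hxy hy => ?_⟩
  have hlt := ncard_succ_lt_of_succ_subset hxy (hirr y) (fun z => htrans x y z hx hxy)
  exact (hmin y hy).not_gt hlt

end Ramified

/-- If a modal formula `φ` is globally satisfied in some nonempty finite Kripke model whose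
frame satisfies Γ₁, then `φ` is globally satisfied in some nonempty finite Kripke model
containing at most one ramified world. -/
theorem finite_gamma1_model_to_at_most_one_ramified (φ : ModalFormula)
    (h : ∃ (W : Type) (R : W → W → Prop) (π : W → ℕ → Prop),
      Finite W ∧ Nonempty W ∧ FrameGamma1 R ∧ GlobalSat R π φ) :
    ∃ (W : Type) (R : W → W → Prop) (π : W → ℕ → Prop),
      Finite W ∧ Nonempty W ∧
      (∀ v₁ v₂, Ramified R v₁ → Ramified R v₂ → v₁ = v₂) ∧ GlobalSat R π φ := by
  obtain ⟨W, R, π, hfin, hne, hΓ₁, hφ⟩ := h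
  by_cases htwo : ∃ v₁ v₂, Ramified R v₁ ∧ Ramified R v₂ ∧ v₁ ≠ v₂
  · obtain ⟨hirr, htrans, -⟩ := hΓ₁ htwo
    obtain ⟨x₀, -, hx₀, -⟩ := htwo
    obtain ⟨x, hx, hnone⟩ := exists_ramified_forall_succ_not_ramified hirr htrans hx₀
    have hS : ∀ ⦃w v⦄, w ∈ {y | R x y} → R w v → v ∈ {y | R x y} :=
      fun w v => htrans x w v hx
    obtain ⟨f, -, hxf⟩ := hx
    refine ⟨{y | R x y}, fun a b => R a b, fun a => π a, inferInstance, ⟨⟨f 0, hxf 0⟩⟩,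
      fun v _ hv _ => (hnone v v.2 ((degGe_subtype_iff hS 7 v).mp hv)).elim,
      globalSat_subtype hS hφ⟩
  · exact ⟨W, R, π, hfin, hne,
      fun v₁ v₂ h₁ h₂ => by_contra fun hne => htwo ⟨v₁, v₂, h₁, h₂, hne⟩, hφ⟩
end

section
/- Let φ be a modal formula globally satisfied in a nonempty Kripke model M (possibly infinite) in which any two ramified worlds have the same type with respect to φ. Then φ is globally satisfied in a nonempty finite Kripke model containing at most one ramified world. -/
/-- The set of subformulas of a modal formula. -/
def Subformulas : ModalFormula → Set ModalFormula
  | .var n => {.var n}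
  | .neg f => insert (.neg f) (Subformulas f)
  | .and f g => insert (.and f g) (Subformulas f ∪ Subformulas g)
  | .or f g => insert (.or f g) (Subformulas f ∪ Subformulas g)
  | .dia f => insert (.dia f) (Subformulas f)
  | .box f => insert (.box f) (Subformulas f)

/-- Two worlds have the same type with respect to `φ`: they satisfy the same
subformulas of `φ`. -/
def SameType {W : Type*} (R : W → W → Prop) (π : W → ℕ → Prop) (φ : ModalFormula)
    (w₁ w₂ : W) : Prop :=
  ∀ ψ ∈ Subformulas φ, (Sat R π w₁ ψ ↔ Sat R π w₂ ψ)

/-! Filtrate the model through the finitely many types of its worlds; as for any filtration,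
a class satisfies exactly the subformulas of `φ` that its members do. In the filtrated model
a class sees only the classes of the successors of one fixed representative, so a ramified
class has a ramified representative; by hypothesis all ramified worlds share one type, hence
there is at most one ramified class. -/

namespace ModalFormula

theorem mem_subformulas_self (ψ : ModalFormula) : ψ ∈ Subformulas ψ := by
  cases ψ <;> simp [Subformulas]

theorem finite_subformulas (φ : ModalFormula) : (Subformulas φ).Finite := by
  induction φ with
  | var n => exact Set.finite_singleton _
  | neg f ih => exact ih.insert _
  | and f g ihf ihg => exact (ihf.union ihg).insert _
  | or f g ihf ihg => exact (ihf.union ihg).insert _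
  | dia f ih => exact ih.insert _
  | box f ih => exact ih.insert _

end ModalFormula

namespace TypeFiltration

open ModalFormula

variable {W : Type*} (R : W → W → Prop) (π : W → ℕ → Prop) (φ : ModalFormula)

def worldType (w : W) : Subformulas φ → Prop := fun ψ => Sat R π w ψ

abbrev World : Type := Set.range (worldType R π φ)

def toWorld (w : W) : World R π φ := ⟨worldType R π φ w, w, rfl⟩

noncomputable def rep (A : World R π φ) : W := A.2.choose

def rel (A B : World R π φ) : Prop := ∃ v, R (rep R π φ A) v ∧ toWorld R π φ v = B

def val (A : World R π φ) (n : ℕ) : Prop := π (rep R π φ A) n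

variable {R π φ}

theorem worldType_rep (A : World R π φ) : worldType R π φ (rep R π φ A) = A.1 :=
  A.2.choose_spec

theorem eq_of_sameType_rep {A B : World R π φ}
    (h : SameType R π φ (rep R π φ A) (rep R π φ B)) : A = B := by
  apply Subtype.ext
  rw [← worldType_rep A, ← worldType_rep B]
  funext ψ
  exact propext (h ψ.1 ψ.2)

theorem sat_rep_toWorld_iff {ψ : ModalFormula} (hψ : ψ ∈ Subformulas φ) (w : W) :
    Sat R π (rep R π φ (toWorld R π φ w)) ψ ↔ Sat R π w ψ :=
  iff_of_eq (congrFun (worldType_rep (toWorld R π φ w)) ⟨ψ, hψ⟩)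

theorem sat_iff_sat_rep {ψ : ModalFormula} (hψ : Subformulas ψ ⊆ Subformulas φ)
    (A : World R π φ) : Sat (rel R π φ) (val R π φ) A ψ ↔ Sat R π (rep R π φ A) ψ := by
  induction ψ generalizing A with
  | var n => rfl
  | neg f ih =>
    simp only [Subformulas, Set.insert_subset_iff] at hψ
    simp only [Sat, ih hψ.2]
  | and f g ihf ihg =>
    simp only [Subformulas, Set.insert_subset_iff, Set.union_subset_iff] at hψ
    simp only [Sat, ihf hψ.2.1, ihg hψ.2.2]
  | or f g ihf ihg =>
    simp only [Subformulas, Set.insert_subset_iff, Set.union_subset_iff] at hψ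
    simp only [Sat, ihf hψ.2.1, ihg hψ.2.2]
  | dia f ih =>
    simp only [Subformulas, Set.insert_subset_iff] at hψ
    have hf := hψ.2 (mem_subformulas_self f)
    simp only [Sat, rel, exists_exists_and_eq_and, ih hψ.2, sat_rep_toWorld_iff hf]
  | box f ih =>
    simp only [Subformulas, Set.insert_subset_iff] at hψ
    have hf := hψ.2 (mem_subformulas_self f)
    simp only [Sat, rel, forall_exists_index, and_imp, forall_apply_eq_imp_iff₂, ih hψ.2,
      sat_rep_toWorld_iff hf]

theorem degGe_rep_of_degGe {m : ℕ} {A : World R π φ} (h : DegGe (rel R π φ) m A) :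
    DegGe R m (rep R π φ A) := by
  obtain ⟨f, hf, hR⟩ := h
  choose v hv hvf using hR
  exact ⟨v, fun i j hij => hf (by rw [← hvf i, ← hvf j, hij]), hv⟩

instance : Finite (World R π φ) :=
  have := (finite_subformulas φ).to_subtype
  Subtype.finite

end TypeFiltration

open TypeFiltration in
/-- If `φ` is globally satisfied in a nonempty Kripke model in which any two ramified worlds
have the same type with respect to `φ`, then `φ` is globally satisfied in a nonempty finite
Kripke model containing at most one ramified world. -/
theorem same_type_ramified_to_finite_at_most_one_ramified (φ : ModalFormula)
    (W : Type) (R : W → W → Prop) (π : W → ℕ → Prop)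
    (hne : Nonempty W) (hsat : GlobalSat R π φ)
    (hram : ∀ w₁ w₂, Ramified R w₁ → Ramified R w₂ → SameType R π φ w₁ w₂) :
    ∃ (W' : Type) (R' : W' → W' → Prop) (π' : W' → ℕ → Prop),
      Finite W' ∧ Nonempty W' ∧
      (∀ v₁ v₂, Ramified R' v₁ → Ramified R' v₂ → v₁ = v₂) ∧ GlobalSat R' π' φ := by
  refine ⟨World R π φ, rel R π φ, val R π φ, inferInstance, hne.map (toWorld R π φ), ?_, ?_⟩
  · intro A B hA hB
    exact eq_of_sameType_rep (hram _ _ (degGe_rep_of_degGe hA) (degGe_rep_of_degGe hB))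
  · intro A
    exact (sat_iff_sat_rep subset_rfl A).2 (hsat _)
end

section
/- Let (W,R) be a finite frame such that for all x,y,z with x ramified, R x y and R y z imply R x z. Let S ⊆ W be a nonempty set of worlds such that every w ∈ S is ramified and from every w ∈ S there is an R-path of length at least 1 to some element of S. Then there exists w ∈ S with R w w. -/
theorem Relation.TransGen.rel_of_trans_left {α : Type*} {r : α → α → Prop} {a b : α}
    (htrans : ∀ b c, r a b → r b c → r a c) (h : Relation.TransGen r a b) : r a b := by
  induction h with
  | single hab => exact hab
  | tail _ hbc ih => exact htrans _ _ ih hbc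

/-- On a finite type, `TransGen r` restricted to `S` is transitive; were it also irreflexive, its
converse would be well founded, and a minimal element of `S` would have no successor in `S`. -/
theorem exists_mem_transGen_self_of_forall_exists {α : Type*} [Finite α] {r : α → α → Prop}
    {S : Set α} (hne : S.Nonempty) (hsucc : ∀ a ∈ S, ∃ b ∈ S, Relation.TransGen r a b) :
    ∃ a ∈ S, Relation.TransGen r a a := by
  by_contra! hirrefl
  let s : S → S → Prop := fun a b => Relation.TransGen r b a
  have : IsTrans S s := ⟨fun _ _ _ hab hbc => hbc.trans hab⟩
  have : Std.Irrefl s := ⟨fun a => hirrefl a a.2⟩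
  obtain ⟨a, -, hmin⟩ := (Finite.wellFounded_of_trans_of_irrefl s).has_min Set.univ
    ⟨⟨hne.some, hne.some_mem⟩, trivial⟩
  obtain ⟨b, hb, hab⟩ := hsucc a a.2
  exact hmin ⟨b, hb⟩ trivial hab

/-- In a finite frame in which `R` is transitive from ramified worlds, any nonempty set `S` of
ramified worlds such that from every element of `S` there is an `R`-path of length at least one
to some element of `S` contains a reflexive world. (An `R`-path of length at least one from `w`
to `v` is witnessed by `Relation.TransGen R w v`.) -/
theorem exists_reflexive_in_ramified_cycle_set (W : Type) [Finite W] (R : W → W → Prop)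
    (htrans : ∀ x y z, Ramified R x → R x y → R y z → R x z)
    (S : Set W) (hne : S.Nonempty)
    (hram : ∀ w ∈ S, Ramified R w)
    (hpath : ∀ w ∈ S, ∃ v ∈ S, Relation.TransGen R w v) :
    ∃ w ∈ S, R w w := by
  obtain ⟨w, hw, hcycle⟩ := exists_mem_transGen_self_of_forall_exists hne hpath
  exact ⟨w, hw, hcycle.rel_of_trans_left (htrans w · · (hram w hw))⟩
end

section
/- Every frame that is a quasi-tree satisfies the frame condition Γ₂. -/
/-- `IsTPath T a l b`: `l` is the list of successive vertices of a `T`-path from `a` to `b`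
(excluding `a`, ending with `b` when `l` is nonempty); its length is the length of `l`. -/
def IsTPath {W : Type*} (T : W → W → Prop) : W → List W → W → Prop
  | a, [], b => a = b
  | a, c :: l, b => T a c ∧ IsTPath T c l b

/-- `(W, T)` is a rooted tree: there is a root from which every world is reachable by a
unique finite `T`-path. -/
def IsRootedTree {W : Type*} (T : W → W → Prop) : Prop :=
  ∃ root : W, ∀ w, ∃! l : List W, IsTPath T root l w

/-- A frame `(W, R)` is a quasi-tree if there is a rooted tree relation `T` on `W` such that
`R w v` holds iff `T w v` holds, or `w` is ramified in `(W, R)` and `v` is a proper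
`T`-descendant of `w`. -/
def IsQuasiTree {W : Type*} (R : W → W → Prop) : Prop :=
  ∃ T : W → W → Prop, IsRootedTree T ∧
    ∀ w v, R w v ↔ (T w v ∨ (Ramified R w ∧ Relation.TransGen T w v))

/-!
In a quasi-tree `R` is contained in the transitive closure of its tree relation `T`, and `T` has
no cycles, since a cycle could be appended to the unique path from the root. Hence `R` is
irreflexive, so the second clause of Γ₂ holds vacuously; the first holds because a ramified
world sees every proper `T`-descendant, and an `R`-successor of an `R`-successor is one.
-/

theorem IsTPath.append {W : Type*} {T : W → W → Prop} {a b c : W} {l p : List W}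
    (hl : IsTPath T a l b) (hp : IsTPath T b p c) : IsTPath T a (l ++ p) c := by
  induction l generalizing a with
  | nil => cases hl; exact hp
  | cons d l ih => exact ⟨hl.1, ih hl.2⟩

theorem IsTPath.exists_ne_nil_of_transGen {W : Type*} {T : W → W → Prop} {a b : W}
    (h : Relation.TransGen T a b) : ∃ l : List W, l ≠ [] ∧ IsTPath T a l b := by
  induction h with
  | single hab => exact ⟨[_], List.cons_ne_nil _ _, hab, rfl⟩
  | tail _ hbc ih =>
      obtain ⟨l, -, hl⟩ := ih
      exact ⟨l ++ [_], by simp, hl.append ⟨hbc, rfl⟩⟩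

theorem IsRootedTree.not_transGen_self {W : Type*} {T : W → W → Prop} (hT : IsRootedTree T)
    (v : W) : ¬ Relation.TransGen T v v := by
  intro hv
  obtain ⟨r, hr⟩ := hT
  obtain ⟨l, hl, huniq⟩ := hr v
  obtain ⟨p, hp, hcycle⟩ := IsTPath.exists_ne_nil_of_transGen hv
  exact hp (List.append_right_eq_self.mp (huniq _ (hl.append hcycle)))

theorem transGen_of_quasiTree_rel {W : Type*} {R T : W → W → Prop}
    (hR : ∀ w v, R w v ↔ (T w v ∨ (Ramified R w ∧ Relation.TransGen T w v))) {a b : W}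
    (hab : R a b) : Relation.TransGen T a b :=
  ((hR a b).mp hab).elim .single And.right

namespace IsQuasiTree

variable {W : Type*} {R : W → W → Prop}

theorem irrefl (h : IsQuasiTree R) (x : W) : ¬ R x x := by
  obtain ⟨T, hT, hR⟩ := h
  exact fun hxx => hT.not_transGen_self x (transGen_of_quasiTree_rel hR hxx)

theorem trans_of_ramified (h : IsQuasiTree R) {x y z : W} (hx : Ramified R x) (hxy : R x y)
    (hyz : R y z) : R x z := by
  obtain ⟨T, -, hR⟩ := h
  exact (hR x z).mpr <| .inr ⟨hx, (transGen_of_quasiTree_rel hR hxy).trans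
    (transGen_of_quasiTree_rel hR hyz)⟩

end IsQuasiTree

/-- Every frame that is a quasi-tree satisfies the frame condition Γ₂. -/
theorem quasiTree_satisfies_gamma2 (W : Type) (R : W → W → Prop) (h : IsQuasiTree R) :
    FrameGamma2 R :=
  ⟨fun _ _ _ => h.trans_of_ramified, fun ⟨v, _, hvv⟩ => absurd hvv (h.irrefl v)⟩
end

section
/- Quasi-tree model property: if a modal formula φ is globally satisfied in some nonempty Kripke model whose frame satisfies Γ₂, then φ is globally satisfied in some nonempty Kripke model whose frame is a quasi-tree. -/
/-! Unravel the model from any world `w₀` into the tree of finite `R`-paths starting at `w₀`, and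
let a path see its one-step extensions and, when its endpoint is ramified, all its proper
extensions. A path is ramified exactly when its endpoint is: a non-ramified path sees only its
one-step extensions, and these correspond injectively to successors of the endpoint. Since a
ramified world sees everything reachable from it by Γ₂(a), the endpoint map is a bounded morphism,
so it preserves truth of every formula. -/

section TPath

variable {α : Type*} {T : α → α → Prop}

theorem IsTPath.eq_getLastD {a b : α} {l : List α} (h : IsTPath T a l b) : b = l.getLastD a := by
  induction l generalizing a with
  | nil => exact h.symm
  | cons c l ih => rw [List.getLastD_cons]; exact ih h.2

theorem isTPath_append {a b : α} {l₁ l₂ : List α} :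
    IsTPath T a (l₁ ++ l₂) b ↔ ∃ c, IsTPath T a l₁ c ∧ IsTPath T c l₂ b := by
  induction l₁ generalizing a with
  | nil => simp [IsTPath]
  | cons x l ih => simp [IsTPath, ih, and_assoc]

theorem isTPath_append_singleton {a b x : α} {l : List α} :
    IsTPath T a (l ++ [x]) b ↔ ∃ c, IsTPath T a l c ∧ T c x ∧ x = b := by
  simp [isTPath_append, IsTPath]

theorem IsTPath.rank_eq {rank : α → ℕ} (hrank : ∀ a b, T a b → rank b = rank a + 1)
    {a b : α} {l : List α} (h : IsTPath T a l b) : rank b = rank a + l.length := by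
  induction l generalizing a with
  | nil => rw [show a = b from h]; rfl
  | cons c l ih => rw [ih h.2, hrank _ _ h.1, List.length_cons]; omega

theorem IsTPath.unique {rank : α → ℕ} (hrank : ∀ a b, T a b → rank b = rank a + 1)
    (hparent : ∀ a a' b, T a b → T a' b → a = a') {a b : α} {p q : List α}
    (hp : IsTPath T a p b) (hq : IsTPath T a q b) : p = q := by
  induction p using List.reverseRecOn generalizing b q with
  | nil =>
    have := hq.rank_eq hrank
    rw [show a = b from hp] at this
    exact (List.length_eq_zero_iff.1 (by omega)).symm
  | append_singleton p x ih =>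
    obtain ⟨c, hpc, hcx, rfl⟩ := isTPath_append_singleton.1 hp
    rcases List.eq_nil_or_concat q with rfl | ⟨q, y, rfl⟩
    · have := hp.rank_eq hrank
      rw [show a = x from hq] at this
      simp at this
    · obtain ⟨c', hqc, hcy, rfl⟩ := isTPath_append_singleton.1 (List.concat_eq_append .. ▸ hq)
      rw [List.concat_eq_append, ih hpc (hparent _ _ _ hcy hcx ▸ hqc)]

end TPath

structure IsBoundedMorphism {W' W : Type*} (R' : W' → W' → Prop) (R : W → W → Prop)
    (f : W' → W) : Prop where
  forth : ∀ {a b}, R' a b → R (f a) (f b)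
  back : ∀ {a v}, R (f a) v → ∃ b, R' a b ∧ f b = v

theorem IsBoundedMorphism.sat_comp_iff {W' W : Type*} {R' : W' → W' → Prop} {R : W → W → Prop}
    {f : W' → W} (hf : IsBoundedMorphism R' R f) (π : W → ℕ → Prop) (ψ : ModalFormula) (a : W') :
    Sat R' (fun b ↦ π (f b)) a ψ ↔ Sat R π (f a) ψ := by
  induction ψ generalizing a with
  | var n => rfl
  | neg ψ ih => exact not_congr (ih a)
  | and ψ χ ihψ ihχ => exact and_congr (ihψ a) (ihχ a)
  | or ψ χ ihψ ihχ => exact or_congr (ihψ a) (ihχ a)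
  | dia ψ ih =>
    constructor
    · rintro ⟨b, hab, hb⟩
      exact ⟨f b, hf.forth hab, (ih b).1 hb⟩
    · rintro ⟨v, hav, hv⟩
      obtain ⟨b, hab, rfl⟩ := hf.back hav
      exact ⟨b, hab, (ih b).2 hv⟩
  | box ψ ih =>
    constructor
    · intro h v hav
      obtain ⟨b, hab, rfl⟩ := hf.back hav
      exact (ih b).1 (h b hab)
    · exact fun h b hab ↦ (ih b).2 (h _ (hf.forth hab))

theorem IsBoundedMorphism.globalSat_comp {W' W : Type*} {R' : W' → W' → Prop}
    {R : W → W → Prop} {f : W' → W} (hf : IsBoundedMorphism R' R f) {π : W → ℕ → Prop}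
    {φ : ModalFormula} (h : GlobalSat R π φ) : GlobalSat R' (fun b ↦ π (f b)) φ :=
  fun a ↦ (hf.sat_comp_iff π φ a).2 (h (f a))

/-- The finite `R`-paths starting at `w₀`, each listed without its initial world. -/
@[ext]
structure Unravelling {W : Type*} (R : W → W → Prop) (w₀ : W) where
  val : List W
  isTPath : IsTPath R w₀ val (val.getLastD w₀)

namespace Unravelling

variable {W : Type*} {R : W → W → Prop} {w₀ : W}

def root : Unravelling R w₀ := ⟨[], rfl⟩

def last (l : Unravelling R w₀) : W := l.val.getLastD w₀

def extend (l : Unravelling R w₀) (x : W) (h : R l.last x) : Unravelling R w₀ :=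
  ⟨l.val ++ [x], isTPath_append_singleton.2 ⟨_, l.isTPath, h, (List.getLastD_concat ..).symm⟩⟩

@[simp]
theorem last_extend (l : Unravelling R w₀) (x : W) (h : R l.last x) : (l.extend x h).last = x :=
  List.getLastD_concat ..

variable (R w₀) in
def Child (l m : Unravelling R w₀) : Prop := ∃ x, m.val = l.val ++ [x]

variable (R w₀) in
def Access (l m : Unravelling R w₀) : Prop :=
  Child R w₀ l m ∨ (Ramified R l.last ∧ Relation.TransGen (Child R w₀) l m)

theorem child_extend (l : Unravelling R w₀) (x : W) (h : R l.last x) :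
    Child R w₀ l (l.extend x h) :=
  ⟨x, rfl⟩

theorem Child.val_eq {l m : Unravelling R w₀} (h : Child R w₀ l m) :
    m.val = l.val ++ [m.last] := by
  obtain ⟨x, hx⟩ := h
  rw [hx, last, hx, List.getLastD_concat]

theorem Child.rel_last {l m : Unravelling R w₀} (h : Child R w₀ l m) : R l.last m.last := by
  obtain ⟨c, hc, hcx, -⟩ := isTPath_append_singleton.1 (h.val_eq ▸ m.isTPath)
  rwa [hc.eq_getLastD] at hcx

theorem Child.length_eq {l m : Unravelling R w₀} (h : Child R w₀ l m) :
    m.val.length = l.val.length + 1 := by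
  rw [h.val_eq, List.length_append, List.length_singleton]

theorem Child.parent_unique {l l' m : Unravelling R w₀} (h : Child R w₀ l m)
    (h' : Child R w₀ l' m) : l = l' :=
  Unravelling.ext (List.append_inj_left' (h.val_eq.symm.trans h'.val_eq) rfl)

theorem exists_isTPath_child_root (l : Unravelling R w₀) :
    ∃ p, IsTPath (Child R w₀) root p l := by
  obtain ⟨l, hl⟩ := l
  induction l using List.reverseRecOn with
  | nil => exact ⟨[], rfl⟩
  | append_singleton l x ih =>
    obtain ⟨c, hc, hcx, -⟩ := isTPath_append_singleton.1 hl
    obtain rfl := hc.eq_getLastD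
    obtain ⟨p, hp⟩ := ih hc
    exact ⟨p ++ [⟨l ++ [x], hl⟩], isTPath_append_singleton.2 ⟨_, hp, ⟨x, rfl⟩, rfl⟩⟩

theorem isRootedTree_child : IsRootedTree (Child R w₀) :=
  ⟨root, fun l ↦ (exists_isTPath_child_root l).elim fun p hp ↦
    ⟨p, hp, fun _ hq ↦ hq.unique (rank := fun l ↦ l.val.length) (fun _ _ ↦ Child.length_eq)
      (fun _ _ _ ↦ Child.parent_unique) hp⟩⟩

theorem ramified_access_iff (l : Unravelling R w₀) :
    Ramified (Access R w₀) l ↔ Ramified R l.last := by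
  constructor
  · rintro ⟨f, hf, haccess⟩
    by_contra hram
    have hchild : ∀ i, Child R w₀ l (f i) := fun i ↦ (haccess i).resolve_right (hram ·.1)
    refine hram ⟨fun i ↦ (f i).last, fun i j hij ↦ hf (Unravelling.ext ?_),
      fun i ↦ (hchild i).rel_last⟩
    rw [(hchild i).val_eq, (hchild j).val_eq]
    exact congrArg (l.val ++ [·]) hij
  · rintro ⟨f, hf, hR⟩
    refine ⟨fun i ↦ l.extend (f i) (hR i), fun i j hij ↦ hf ?_, fun i ↦ .inl (child_extend ..)⟩
    simpa using congrArg last hij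

theorem isQuasiTree_access : IsQuasiTree (Access R w₀) :=
  ⟨Child R w₀, isRootedTree_child, fun l m ↦ by rw [ramified_access_iff]; rfl⟩

theorem isBoundedMorphism_last (htrans : ∀ x y z, Ramified R x → R x y → R y z → R x z) :
    IsBoundedMorphism (Access R w₀) R last where
  forth := by
    rintro l m (h | ⟨hram, h⟩)
    · exact h.rel_last
    · induction h with
      | single h => exact h.rel_last
      | tail _ h ih => exact htrans _ _ _ hram ih h.rel_last
  back {l v} h := ⟨l.extend v h, .inl (child_extend ..), last_extend ..⟩

end Unravelling

/-- Quasi-tree model property: if a modal formula is globally satisfied in some nonempty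
Kripke model whose frame satisfies Γ₂, then it is globally satisfied in some nonempty Kripke
model whose frame is a quasi-tree. -/
theorem gamma2_quasiTree_model_property (φ : ModalFormula)
    (h : ∃ (W : Type) (R : W → W → Prop) (π : W → ℕ → Prop),
      Nonempty W ∧ FrameGamma2 R ∧ GlobalSat R π φ) :
    ∃ (W : Type) (R : W → W → Prop) (π : W → ℕ → Prop),
      Nonempty W ∧ IsQuasiTree R ∧ GlobalSat R π φ := by
  obtain ⟨W, R, π, ⟨w₀⟩, ⟨htrans, -⟩, hφ⟩ := h
  exact ⟨Unravelling R w₀, Unravelling.Access R w₀, fun l ↦ π l.last, ⟨Unravelling.root⟩,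
    Unravelling.isQuasiTree_access, (Unravelling.isBoundedMorphism_last htrans).globalSat_comp hφ⟩
end
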